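/- arXiv:2010.00327 — 2 statements merged into one kernel-verified Lean document; each statement's English description precedes it below -/
import Mathlib

section
/- Let ζ = 2 + √2, let k_3 ≥ k_2 > 0 and let 0 < δ < (2ζ)^{-2}·k_2. Define sequences recursively by α_0 = k_2, β_0 = k_3, α_{ℓ+1} = ((1 − ζ√(δ/α_ℓ))/2)·α_ℓ and β_{ℓ+1} = ((1 + ζ√(δ/α_ℓ))/2)·β_ℓ. Then there exists L ∈ ℕ_0 such that: (i) α_ℓ ≥ (2ζ)²δ for all ℓ ≤ L; (ii) ζ²δ ≤ α_{L+1} < (2ζ)²δ; and (iii) β_{L+1} < 35.21·(k_3/k_2)·α_{L+1}. -/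
noncomputable def wg : ℕ → ℝ
  | 0 => 3
  | 1 => 2.093836324
  | 2 => 1.666666667
  | 3 => 1.429474469
  | 4 => 1.285714286
  | 5 => 1.19391667
  | 6 => 1.133333334
  | 7 => 1.092475214
  | 8 => 1.06451613
  | 9 => 1.045192804
  | 10 => 1.031746032
  | 11 => 1.022343956
  | 12 => 1.015748032
  | 13 => 1.011109918
  | 14 => 1.007843138
  | 15 => 1.005539573
  | 16 => 1.003913895
  | 17 => 1.002765956
  | 18 => 1.001955035
  | 19 => 1.001382023
  | 20 => 1.00097704
  | 21 => 1.000690773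
  | 22 => 1.000488401
  | 23 => 1.000345327
  | (n+24) => 1 + (8192/8191) * (Real.sqrt 2)⁻¹ ^ (n+24)

noncomputable def wG (j : ℕ) : ℝ := ∏ m ∈ Finset.range j, wg m

lemma sqrt2_sq : Real.sqrt 2 ^ 2 = 2 := Real.sq_sqrt (by norm_num)

lemma sqrt2_lb : 1.414213562 ≤ Real.sqrt 2 := by
  nlinarith [sqrt2_sq, Real.sqrt_nonneg 2]

lemma sqrt2_ub : Real.sqrt 2 ≤ 1.414213563 := by
  nlinarith [sqrt2_sq, Real.sqrt_nonneg 2]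

lemma sqrt2_pos : (0:ℝ) < Real.sqrt 2 := lt_of_lt_of_le (by norm_num) sqrt2_lb

lemma sqrt2_inv_nonneg : (0:ℝ) ≤ (Real.sqrt 2)⁻¹ := inv_nonneg.mpr (Real.sqrt_nonneg 2)

lemma sqrt2_inv_le : (Real.sqrt 2)⁻¹ ≤ 0.707106782 := by
  have h := inv_mul_cancel₀ (ne_of_gt sqrt2_pos)
  nlinarith [sqrt2_lb, sqrt2_inv_nonneg]

lemma sqrt2_inv_le_one : (Real.sqrt 2)⁻¹ ≤ 1 := le_trans sqrt2_inv_le (by norm_num)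

lemma rpow_even (k : ℕ) : (Real.sqrt 2)⁻¹ ^ (2*k) = ((2:ℝ)^k)⁻¹ := by
  rw [pow_mul, inv_pow, sqrt2_sq, ← inv_pow]

lemma one_le_wg (j : ℕ) : 1 ≤ wg j := by
  rcases lt_or_ge j 24 with h | h
  · interval_cases j <;> simp only [wg] <;> norm_num
  · obtain ⟨n, rfl⟩ : ∃ n, j = n + 24 := ⟨j - 24, by omega⟩
    simp only [wg]
    have h1 : (0:ℝ) ≤ (Real.sqrt 2)⁻¹ ^ (n+24) := by positivity
    nlinarith

lemma wg_bound (j : ℕ) (v : ℝ) (hv : v ≤ 1/2 * (Real.sqrt 2)⁻¹ ^ j) :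
    1 + v ≤ wg j * (1 - v) := by
  rcases lt_or_ge j 24 with h | h
  · interval_cases j
    · have hv' : v ≤ 1/2 := by simpa using hv
      simp only [wg]; norm_num; linarith
    · have hv' : v ≤ 0.353553391 := by
        refine hv.trans ?_
        rw [show (Real.sqrt 2)⁻¹ ^ 1 = (Real.sqrt 2)⁻¹ ^ (2*0+1) by norm_num, pow_succ, rpow_even]
        have h := sqrt2_inv_le
        have h0 := sqrt2_inv_nonneg
        norm_num
        linarith
      simp only [wg]; norm_num; linarith
    · have hv' : v ≤ 0.25 := by
        refine hv.trans ?_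
        rw [show (2:ℕ) = 2*1 by norm_num, rpow_even]
        norm_num
      simp only [wg]; norm_num; linarith
    · have hv' : v ≤ 0.1767766955 := by
        refine hv.trans ?_
        rw [show (3:ℕ) = 2*1+1 by norm_num, pow_succ, rpow_even]
        have h := sqrt2_inv_le
        have h0 := sqrt2_inv_nonneg
        norm_num
        linarith
      simp only [wg]; norm_num; linarith
    · have hv' : v ≤ 0.125 := by
        refine hv.trans ?_
        rw [show (4:ℕ) = 2*2 by norm_num, rpow_even]
        norm_num
      simp only [wg]; norm_num; linarith
    · have hv' : v ≤ 0.08838834775 := by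
        refine hv.trans ?_
        rw [show (5:ℕ) = 2*2+1 by norm_num, pow_succ, rpow_even]
        have h := sqrt2_inv_le
        have h0 := sqrt2_inv_nonneg
        norm_num
        linarith
      simp only [wg]; norm_num; linarith
    · have hv' : v ≤ 0.0625 := by
        refine hv.trans ?_
        rw [show (6:ℕ) = 2*3 by norm_num, rpow_even]
        norm_num
      simp only [wg]; norm_num; linarith
    · have hv' : v ≤ 0.044194173875 := by
        refine hv.trans ?_
        rw [show (7:ℕ) = 2*3+1 by norm_num, pow_succ, rpow_even]
        have h := sqrt2_inv_le
        have h0 := sqrt2_inv_nonneg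
        norm_num
        linarith
      simp only [wg]; norm_num; linarith
    · have hv' : v ≤ 0.03125 := by
        refine hv.trans ?_
        rw [show (8:ℕ) = 2*4 by norm_num, rpow_even]
        norm_num
      simp only [wg]; norm_num; linarith
    · have hv' : v ≤ 0.0220970869375 := by
        refine hv.trans ?_
        rw [show (9:ℕ) = 2*4+1 by norm_num, pow_succ, rpow_even]
        have h := sqrt2_inv_le
        have h0 := sqrt2_inv_nonneg
        norm_num
        linarith
      simp only [wg]; norm_num; linarith
    · have hv' : v ≤ 0.015625 := by
        refine hv.trans ?_
        rw [show (10:ℕ) = 2*5 by norm_num, rpow_even]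
        norm_num
      simp only [wg]; norm_num; linarith
    · have hv' : v ≤ 0.01104854346875 := by
        refine hv.trans ?_
        rw [show (11:ℕ) = 2*5+1 by norm_num, pow_succ, rpow_even]
        have h := sqrt2_inv_le
        have h0 := sqrt2_inv_nonneg
        norm_num
        linarith
      simp only [wg]; norm_num; linarith
    · have hv' : v ≤ 0.0078125 := by
        refine hv.trans ?_
        rw [show (12:ℕ) = 2*6 by norm_num, rpow_even]
        norm_num
      simp only [wg]; norm_num; linarith
    · have hv' : v ≤ 0.005524271734375 := by
        refine hv.trans ?_
        rw [show (13:ℕ) = 2*6+1 by norm_num, pow_succ, rpow_even]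
        have h := sqrt2_inv_le
        have h0 := sqrt2_inv_nonneg
        norm_num
        linarith
      simp only [wg]; norm_num; linarith
    · have hv' : v ≤ 0.00390625 := by
        refine hv.trans ?_
        rw [show (14:ℕ) = 2*7 by norm_num, rpow_even]
        norm_num
      simp only [wg]; norm_num; linarith
    · have hv' : v ≤ 0.0027621358671875 := by
        refine hv.trans ?_
        rw [show (15:ℕ) = 2*7+1 by norm_num, pow_succ, rpow_even]
        have h := sqrt2_inv_le
        have h0 := sqrt2_inv_nonneg
        norm_num
        linarith
      simp only [wg]; norm_num; linarith
    · have hv' : v ≤ 0.001953125 := by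
        refine hv.trans ?_
        rw [show (16:ℕ) = 2*8 by norm_num, rpow_even]
        norm_num
      simp only [wg]; norm_num; linarith
    · have hv' : v ≤ 0.00138106793359375 := by
        refine hv.trans ?_
        rw [show (17:ℕ) = 2*8+1 by norm_num, pow_succ, rpow_even]
        have h := sqrt2_inv_le
        have h0 := sqrt2_inv_nonneg
        norm_num
        linarith
      simp only [wg]; norm_num; linarith
    · have hv' : v ≤ 0.0009765625 := by
        refine hv.trans ?_
        rw [show (18:ℕ) = 2*9 by norm_num, rpow_even]
        norm_num
      simp only [wg]; norm_num; linarith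
    · have hv' : v ≤ 0.000690533966796875 := by
        refine hv.trans ?_
        rw [show (19:ℕ) = 2*9+1 by norm_num, pow_succ, rpow_even]
        have h := sqrt2_inv_le
        have h0 := sqrt2_inv_nonneg
        norm_num
        linarith
      simp only [wg]; norm_num; linarith
    · have hv' : v ≤ 0.00048828125 := by
        refine hv.trans ?_
        rw [show (20:ℕ) = 2*10 by norm_num, rpow_even]
        norm_num
      simp only [wg]; norm_num; linarith
    · have hv' : v ≤ 0.0003452669833984375 := by
        refine hv.trans ?_
        rw [show (21:ℕ) = 2*10+1 by norm_num, pow_succ, rpow_even]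
        have h := sqrt2_inv_le
        have h0 := sqrt2_inv_nonneg
        norm_num
        linarith
      simp only [wg]; norm_num; linarith
    · have hv' : v ≤ 0.000244140625 := by
        refine hv.trans ?_
        rw [show (22:ℕ) = 2*11 by norm_num, rpow_even]
        norm_num
      simp only [wg]; norm_num; linarith
    · have hv' : v ≤ 0.00017263349169921875 := by
        refine hv.trans ?_
        rw [show (23:ℕ) = 2*11+1 by norm_num, pow_succ, rpow_even]
        have h := sqrt2_inv_le
        have h0 := sqrt2_inv_nonneg
        norm_num
        linarith
      simp only [wg]; norm_num; linarith
  · obtain ⟨n, rfl⟩ : ∃ n, j = n + 24 := ⟨j - 24, by omega⟩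
    simp only [wg]
    set w : ℝ := (Real.sqrt 2)⁻¹ ^ (n+24) with hw
    have hw0 : 0 < w := by positivity
    have hwle : w ≤ ((2:ℝ)^12)⁻¹ := by
      rw [hw, show ((2:ℝ)^12)⁻¹ = (Real.sqrt 2)⁻¹ ^ (2*12) from (rpow_even 12).symm]
      exact pow_le_pow_of_le_one sqrt2_inv_nonneg sqrt2_inv_le_one (by omega)
    have hwle' : w ≤ 1/4096 := by
      refine hwle.trans ?_
      norm_num
    nlinarith [hv, hw0, mul_le_mul_of_nonneg_left hv (show (0:ℝ) ≤ (8192/8191)*w by positivity)]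

lemma wG_succ (j : ℕ) : wG (j+1) = wG j * wg j := Finset.prod_range_succ wg j

lemma one_le_wG (j : ℕ) : 1 ≤ wG j := by
  induction j with
  | zero => simp [wG]
  | succ m ih =>
    rw [wG_succ]
    nlinarith [one_le_wg m]

lemma wG_mono : Monotone wG := by
  apply monotone_nat_of_le_succ
  intro n
  rw [wG_succ]
  nlinarith [one_le_wg n, one_le_wG n]

lemma wG24_le : wG 24 ≤ 35.180494 := by
  show (∏ m ∈ Finset.range 24, wg m) ≤ 35.180494
  rw [show (24:ℕ) = 23+1 from rfl]
  repeat rw [Finset.prod_range_succ]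
  rw [Finset.prod_range_zero]
  simp only [wg]
  norm_num

lemma wG_tail (n : ℕ) : wG (n+24) ≤ 35.2099 - 120.24 * (Real.sqrt 2)⁻¹ ^ (n+24) := by
  induction n with
  | zero =>
    have h : (Real.sqrt 2)⁻¹ ^ (0+24) = ((2:ℝ)^12)⁻¹ := by
      rw [show (0+24 : ℕ) = 2*12 by norm_num, rpow_even]
    rw [h]
    have := wG24_le
    norm_num at this ⊢
    linarith
  | succ m ih =>
    have hstep : wG (m+24+1) = wG (m+24) * wg (m+24) := wG_succ (m+24)
    have hwg : wg (m+24) = 1 + (8192/8191) * (Real.sqrt 2)⁻¹ ^ (m+24) := rfl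
    set w : ℝ := (Real.sqrt 2)⁻¹ ^ (m+24) with hwdef
    have hw0 : 0 < w := by positivity
    have hwg1 : (0:ℝ) ≤ 1 + (8192/8191) * w := by positivity
    have h1 : wG (m+24+1) ≤ (35.2099 - 120.24 * w) * (1 + (8192/8191) * w) := by
      rw [hstep, hwg]
      exact mul_le_mul_of_nonneg_right ih hwg1
    have h2 : (Real.sqrt 2)⁻¹ ^ (m+1+24) = w * (Real.sqrt 2)⁻¹ := by
      rw [show m+1+24 = (m+24)+1 by omega, pow_succ]
    rw [show m+1+24 = (m+24)+1 by omega] at h2 ⊢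
    rw [h2]
    have hr := sqrt2_inv_le
    have hr0 := sqrt2_inv_nonneg
    nlinarith [h1, hw0, mul_le_mul_of_nonneg_left hr (show (0:ℝ) ≤ 120.24*w by positivity), sq_nonneg w]

lemma wG_le (j : ℕ) : wG j ≤ 35.2099 := by
  rcases le_or_gt j 24 with h | h
  · have h1 : wG j ≤ wG 24 := wG_mono h
    have := wG24_le
    linarith
  · obtain ⟨n, rfl⟩ : ∃ n, j = n + 24 := ⟨j - 24, by omega⟩
    have := wG_tail n
    have h1 : (0:ℝ) < (Real.sqrt 2)⁻¹ ^ (n+24) := by positivity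
    nlinarith

attribute [irreducible] wg wG

set_option maxHeartbeats 1000000

/-- **Key recursion estimate from the proof of Theorem 2.3 of the paper.**
With `ζ = 2 + √2`, `k₃ ≥ k₂ > 0`, `0 < δ < (2ζ)⁻² k₂`, and the recursively defined
sequences `α, β`, there is an index `L` with `α ℓ ≥ (2ζ)² δ` for `ℓ ≤ L`,
`ζ² δ ≤ α (L+1) < (2ζ)² δ` and `β (L+1) < 35.21 (k₃/k₂) α (L+1)`. -/
theorem weaver_recursion_estimate (k₂ k₃ δ : ℝ) (hk₂ : 0 < k₂) (hk₂₃ : k₂ ≤ k₃)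
    (hδ₀ : 0 < δ) (hδ : δ < (2 * (2 + Real.sqrt 2))⁻¹ ^ 2 * k₂)
    (α β : ℕ → ℝ) (hα₀ : α 0 = k₂) (hβ₀ : β 0 = k₃)
    (hαrec : ∀ ℓ : ℕ,
      α (ℓ + 1) = (1 - (2 + Real.sqrt 2) * Real.sqrt (δ / α ℓ)) / 2 * α ℓ)
    (hβrec : ∀ ℓ : ℕ,
      β (ℓ + 1) = (1 + (2 + Real.sqrt 2) * Real.sqrt (δ / α ℓ)) / 2 * β ℓ) :
    ∃ L : ℕ,
      (∀ ℓ ≤ L, (2 * (2 + Real.sqrt 2)) ^ 2 * δ ≤ α ℓ) ∧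
      ((2 + Real.sqrt 2) ^ 2 * δ ≤ α (L + 1) ∧
        α (L + 1) < (2 * (2 + Real.sqrt 2)) ^ 2 * δ) ∧
      β (L + 1) < 35.21 * (k₃ / k₂) * α (L + 1) := by
  have hs0 : (0:ℝ) ≤ Real.sqrt 2 := Real.sqrt_nonneg 2
  have hζ : (0:ℝ) < 2 + Real.sqrt 2 := by linarith
  have hT0 : 0 < (2 * (2 + Real.sqrt 2)) ^ 2 * δ := by positivity
  have h2ζ : (0:ℝ) < (2 * (2 + Real.sqrt 2)) ^ 2 := by positivity
  have hδk : (2 * (2 + Real.sqrt 2)) ^ 2 * δ < k₂ := by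
    have h4 := mul_lt_mul_of_pos_left hδ h2ζ
    have h5 : (2 * (2 + Real.sqrt 2)) ^ 2 * ((2 * (2 + Real.sqrt 2))⁻¹ ^ 2 * k₂) = k₂ := by
      rw [inv_pow, ← mul_assoc, mul_inv_cancel₀ (ne_of_gt h2ζ), one_mul]
    rw [h5] at h4
    exact h4
  -- key one-step facts
  have key : ∀ ℓ, (2 * (2 + Real.sqrt 2)) ^ 2 * δ ≤ α ℓ →
      (0 < (2 + Real.sqrt 2) * Real.sqrt (δ / α ℓ) ∧
       (2 + Real.sqrt 2) * Real.sqrt (δ / α ℓ) ≤ 1/2 ∧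
       α ℓ / 4 ≤ α (ℓ+1) ∧ α (ℓ+1) < α ℓ / 2) := by
    intro ℓ hℓ
    have hαp : 0 < α ℓ := lt_of_lt_of_le hT0 hℓ
    have hq0 : 0 < δ / α ℓ := div_pos hδ₀ hαp
    have hu0 : 0 < (2 + Real.sqrt 2) * Real.sqrt (δ / α ℓ) :=
      mul_pos hζ (Real.sqrt_pos.mpr hq0)
    have hdiv : δ / α ℓ ≤ (2 * (2 + Real.sqrt 2))⁻¹ ^ 2 := by
      rw [div_le_iff₀ hαp, inv_pow]
      have h5 : ((2 * (2 + Real.sqrt 2)) ^ 2)⁻¹ * ((2 * (2 + Real.sqrt 2)) ^ 2 * δ) = δ := by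
        rw [← mul_assoc, inv_mul_cancel₀ (ne_of_gt h2ζ), one_mul]
      have h6 := mul_le_mul_of_nonneg_left hℓ (inv_pos.mpr h2ζ).le
      rw [h5] at h6
      exact h6
    have hinv0 : (0:ℝ) ≤ (2 * (2 + Real.sqrt 2))⁻¹ := by positivity
    have hsq : Real.sqrt (δ / α ℓ) ≤ (2 * (2 + Real.sqrt 2))⁻¹ := by
      have h7 := Real.sqrt_le_sqrt hdiv
      rwa [Real.sqrt_sq hinv0] at h7
    have huh : (2 + Real.sqrt 2) * Real.sqrt (δ / α ℓ) ≤ 1/2 := by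
      have h8 := mul_le_mul_of_nonneg_left hsq hζ.le
      have h9 : (2 + Real.sqrt 2) * (2 * (2 + Real.sqrt 2))⁻¹ = 1/2 := by
        rw [mul_inv, ← mul_assoc, mul_comm ((2:ℝ)+Real.sqrt 2), mul_assoc,
          mul_inv_cancel₀ (ne_of_gt hζ)]
        norm_num
      linarith
    refine ⟨hu0, huh, ?_, ?_⟩
    · rw [hαrec ℓ]; nlinarith
    · rw [hαrec ℓ]; nlinarith
  -- existence of L
  have hex : ∃ n, α (n+1) < (2 * (2 + Real.sqrt 2)) ^ 2 * δ := by
    by_contra hno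
    push_neg at hno
    have hall : ∀ n, (2 * (2 + Real.sqrt 2)) ^ 2 * δ ≤ α n := by
      intro n
      cases n with
      | zero => rw [hα₀]; exact hδk.le
      | succ m => exact hno m
    have hdec : ∀ n, α n ≤ k₂ / 2 ^ n := by
      intro n
      induction n with
      | zero => simp [hα₀]
      | succ m ih =>
        have h := (key m (hall m)).2.2.2
        have heq : k₂ / 2 ^ (m+1) = (k₂ / 2 ^ m) / 2 := by
          rw [pow_succ]; ring
        rw [heq]
        linarith
    obtain ⟨n, hn⟩ := pow_unbounded_of_one_lt
      (k₂ / ((2 * (2 + Real.sqrt 2)) ^ 2 * δ)) (by norm_num : (1:ℝ) < 2)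
    have h2n : (0:ℝ) < 2 ^ n := by positivity
    rw [div_lt_iff₀ hT0] at hn
    have hcon : k₂ / 2 ^ n < (2 * (2 + Real.sqrt 2)) ^ 2 * δ := by
      rw [div_lt_iff₀ h2n]
      nlinarith
    linarith [hall n, hdec n]
  classical
  set L := Nat.find hex with hLdef
  have hL1 : α (L+1) < (2 * (2 + Real.sqrt 2)) ^ 2 * δ := Nat.find_spec hex
  have hαT : ∀ ℓ ≤ L, (2 * (2 + Real.sqrt 2)) ^ 2 * δ ≤ α ℓ := by
    intro ℓ hℓ
    cases ℓ with
    | zero => rw [hα₀]; exact hδk.le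
    | succ m =>
      have hm : m < L := by omega
      exact not_lt.mp (Nat.find_min hex hm)
  have hii1 : (2 + Real.sqrt 2) ^ 2 * δ ≤ α (L+1) := by
    have h := (key L (hαT L le_rfl)).2.2.1
    have hT := hαT L le_rfl
    nlinarith
  have hαL1pos : 0 < α (L+1) := by nlinarith [hii1, mul_pos (mul_pos hζ hζ) hδ₀]
  -- positivity of β
  have hβpos : ∀ ℓ, 0 < β ℓ := by
    intro ℓ
    induction ℓ with
    | zero => rw [hβ₀]; linarith
    | succ m ih =>
      rw [hβrec m]
      have hu : 0 ≤ (2 + Real.sqrt 2) * Real.sqrt (δ / α m) :=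
        mul_nonneg hζ.le (Real.sqrt_nonneg _)
      nlinarith
  -- u decay
  have hustep : ∀ ℓ ≤ L, Real.sqrt 2 * ((2 + Real.sqrt 2) * Real.sqrt (δ / α ℓ)) ≤
      (2 + Real.sqrt 2) * Real.sqrt (δ / α (ℓ+1)) := by
    intro ℓ hℓ
    have hT := hαT ℓ hℓ
    have hk := key ℓ hT
    have hαp : 0 < α ℓ := lt_of_lt_of_le hT0 hT
    have hα1 : 0 < α (ℓ+1) := by nlinarith [hk.2.2.1]
    have h2 : 2 * (δ / α ℓ) ≤ δ / α (ℓ+1) := by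
      rw [mul_div_assoc'] at *
      rw [div_le_div_iff₀ hαp hα1]
      nlinarith [hk.2.2.2]
    have h3 : Real.sqrt (2 * (δ / α ℓ)) ≤ Real.sqrt (δ / α (ℓ+1)) := Real.sqrt_le_sqrt h2
    rw [Real.sqrt_mul (by norm_num : (0:ℝ) ≤ 2)] at h3
    calc Real.sqrt 2 * ((2 + Real.sqrt 2) * Real.sqrt (δ / α ℓ))
        = (2 + Real.sqrt 2) * (Real.sqrt 2 * Real.sqrt (δ / α ℓ)) := by ring
      _ ≤ (2 + Real.sqrt 2) * Real.sqrt (δ / α (ℓ+1)) :=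
          mul_le_mul_of_nonneg_left h3 hζ.le
  have hudecay : ∀ j ≤ L, (2 + Real.sqrt 2) * Real.sqrt (δ / α (L-j)) ≤
      1/2 * (Real.sqrt 2)⁻¹ ^ j := by
    intro j
    induction j with
    | zero =>
      intro _
      simpa using (key L (hαT L le_rfl)).2.1
    | succ m ih =>
      intro hm
      have h1 : L - m = (L - (m+1)) + 1 := by omega
      have h2 := hustep (L-(m+1)) (by omega)
      rw [← h1] at h2
      have h3 := ih (by omega)
      have h5 : Real.sqrt 2 * ((Real.sqrt 2)⁻¹ * (1/2 * (Real.sqrt 2)⁻¹ ^ m)) =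
          1/2 * (Real.sqrt 2)⁻¹ ^ m := by
        rw [← mul_assoc, mul_inv_cancel₀ (ne_of_gt sqrt2_pos), one_mul]
      have h4 : (2 + Real.sqrt 2) * Real.sqrt (δ / α (L-(m+1))) ≤
          (Real.sqrt 2)⁻¹ * (1/2 * (Real.sqrt 2)⁻¹ ^ m) := by
        rw [← mul_le_mul_iff_right₀ sqrt2_pos, h5]
        exact le_trans h2 h3
      calc (2 + Real.sqrt 2) * Real.sqrt (δ / α (L-(m+1)))
          ≤ (Real.sqrt 2)⁻¹ * (1/2 * (Real.sqrt 2)⁻¹ ^ m) := h4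
        _ = 1/2 * (Real.sqrt 2)⁻¹ ^ (m+1) := by rw [pow_succ]; ring
  -- main product claim
  have claim : ∀ j ≤ L+1, β (L+1) * α (L+1-j) ≤ wG j * (β (L+1-j) * α (L+1)) := by
    intro j
    induction j with
    | zero =>
      intro _
      simp only [Nat.sub_zero, wG, Finset.range_zero, Finset.prod_empty, one_mul]
      exact le_refl _
    | succ j ih =>
      intro hj
      have hjL : j ≤ L := by omega
      have hij := ih (by omega)
      have hℓ1 : L + 1 - j = (L - j) + 1 := by omega
      have hℓ2 : L + 1 - (j+1) = L - j := by omega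
      rw [hℓ1] at hij
      rw [hℓ2]
      have hℓL : L - j ≤ L := by omega
      have hu := hudecay j hjL
      have hw := wg_bound j _ hu
      have hkey := key (L-j) (hαT (L-j) hℓL)
      have hβℓ : 0 < β (L-j) := hβpos (L-j)
      have hG1 : 1 ≤ wG j := one_le_wG j
      rw [hαrec (L-j), hβrec (L-j)] at hij
      rw [wG_succ]
      set u := (2 + Real.sqrt 2) * Real.sqrt (δ / α (L-j)) with hudef
      have h1u : 0 < 1 - u := by linarith [hkey.2.1]
      have hstep2 : wG j * ((1+u) * (β (L-j) * α (L+1))) ≤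
          wG j * ((wg j * (1-u)) * (β (L-j) * α (L+1))) := by
        apply mul_le_mul_of_nonneg_left _ (by linarith : (0:ℝ) ≤ wG j)
        apply mul_le_mul_of_nonneg_right hw
        positivity
      have hfin : (1-u) * (β (L+1) * α (L-j)) ≤
          (1-u) * (wG j * wg j * (β (L-j) * α (L+1))) := by nlinarith [hij, hstep2]
      exact le_of_mul_le_mul_left hfin h1u
  -- conclusion
  have hC := claim (L+1) le_rfl
  rw [Nat.sub_self, hα₀, hβ₀] at hC
  have hGle := wG_le (L+1)
  have hk₃ : 0 < k₃ := lt_of_lt_of_le hk₂ hk₂₃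
  have hiii : β (L+1) < 35.21 * (k₃ / k₂) * α (L+1) := by
    have h2 : wG (L+1) * (k₃ * α (L+1)) ≤ 35.2099 * (k₃ * α (L+1)) :=
      mul_le_mul_of_nonneg_right hGle (by positivity)
    have h1 : β (L+1) * k₂ < 35.21 * (k₃ * α (L+1)) := by
      nlinarith [mul_pos hk₃ hαL1pos]
    rw [show (35.21 : ℝ) * (k₃ / k₂) * α (L+1) = (35.21 * (k₃ * α (L+1))) / k₂ by
      field_simp]
    rw [lt_div_iff₀ hk₂]
    linarith
  exact ⟨L, hαT, ⟨hii1, hL1⟩, hiii⟩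
end

section
/- The infinite product ∏_{ℓ=0}^∞ (1 + 2^{-1-ℓ/2})/(1 − 2^{-1-ℓ/2}) converges and its value is strictly less than 35.21. -/
noncomputable section
namespace InfProdAux

noncomputable def t : ℝ := (2 : ℝ) ^ (-(1:ℝ)/2)
noncomputable def q : ℝ := 7071068/10000000
noncomputable def c : ℝ := 2/(1 - q^21/2)
noncomputable def S : ℝ := (q^21/2)/(1 - q)
noncomputable def Q : ℝ := ∏ ℓ ∈ Finset.range 21, (1 + q^ℓ/2)/(1 - q^ℓ/2)
noncomputable def B : ℝ := Q * (1 - c*S)⁻¹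

lemma ht0 : 0 < t := Real.rpow_pos_of_pos two_pos _
lemma htsq : t ^ 2 = 1/2 := by
  unfold t
  rw [← Real.rpow_natCast ((2:ℝ) ^ (-(1:ℝ)/2)) 2, ← Real.rpow_mul (by norm_num)]
  norm_num
lemma htq : t ≤ q := by
  have h := htsq; have h0 := ht0; unfold q; nlinarith [h, h0]
lemma ht1 : t < 1 := by nlinarith [htsq, ht0]
lemma hq1 : q < 1 := by unfold q; norm_num
lemma hq0 : 0 < q := by unfold q; norm_num
lemma hxq0 : 0 < q^21/2 := by have := hq0; positivity
lemma hxq1 : q^21/2 < 1 := by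
  have := pow_le_one₀ hq0.le hq1.le (n := 21); linarith
lemma hc0 : 0 < c := div_pos two_pos (by linarith [hxq1])

lemma hx (ℓ : ℕ) : (2 : ℝ) ^ (-1 - (ℓ : ℝ)/2) = (1/2) * t ^ ℓ := by
  unfold t
  rw [← Real.rpow_natCast ((2:ℝ) ^ (-(1:ℝ)/2)) ℓ, ← Real.rpow_mul (by norm_num)]
  rw [show (1:ℝ)/2 = (2:ℝ) ^ (-(1:ℝ)) by rw [Real.rpow_neg_one]; norm_num]
  rw [← Real.rpow_add (by norm_num)]
  ring_nf

noncomputable def f (ℓ : ℕ) : ℝ :=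
  (1 + (2 : ℝ) ^ (-1 - (ℓ : ℝ) / 2)) / (1 - (2 : ℝ) ^ (-1 - (ℓ : ℝ) / 2))

lemma xpos (ℓ : ℕ) : 0 < (1/2) * t ^ ℓ := mul_pos (by norm_num) (pow_pos ht0 ℓ)
lemma xle (ℓ : ℕ) : (1/2) * t ^ ℓ ≤ 1/2 := by
  nlinarith [pow_le_one₀ ht0.le ht1.le (n := ℓ), pow_nonneg ht0.le ℓ]

lemma hf_one (ℓ : ℕ) : 1 ≤ f ℓ := by
  unfold f; rw [hx ℓ]
  have h1 := xpos ℓ; have h2 := xle ℓ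
  rw [le_div_iff₀ (by linarith)]
  linarith

lemma ratio_mono {x y : ℝ} (hxy : x ≤ y) (_hx0 : 0 ≤ x) (hy1 : y < 1) :
    (1+x)/(1-x) ≤ (1+y)/(1-y) := by
  rw [div_le_div_iff₀ (by linarith) (by linarith)]
  nlinarith

lemma hf_le (ℓ : ℕ) : f ℓ ≤ (1 + q^ℓ/2)/(1 - q^ℓ/2) := by
  unfold f; rw [hx ℓ]
  have h1 := xpos ℓ
  have h2 : (1/2) * t ^ ℓ ≤ q^ℓ/2 := by
    have := pow_le_pow_left₀ ht0.le htq ℓ; linarith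
  have h3 : q^ℓ/2 < 1 := by
    have := pow_le_one₀ hq0.le hq1.le (n := ℓ); linarith
  exact ratio_mono h2 h1.le h3

/-- tail factor bound -/
lemma hf_tail (i : ℕ) : f (21 + i) ≤ Real.exp (c * ((1/2) * t ^ (21 + i))) := by
  set x : ℝ := (1/2) * t ^ (21 + i) with hxdef
  have h1 : 0 < x := xpos _
  have h2 : x ≤ q^21/2 := by
    have ha : t ^ (21 + i) ≤ t ^ 21 :=
      pow_le_pow_of_le_one ht0.le ht1.le (Nat.le_add_right _ _)
    have hb : t ^ 21 ≤ q ^ 21 := pow_le_pow_left₀ ht0.le htq 21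
    rw [hxdef]; linarith
  have hc2 : c * (1 - q^21/2) = 2 := by
    unfold c
    exact div_mul_cancel₀ 2 (by linarith [hxq1])
  have hstep : f (21 + i) ≤ 1 + c * x := by
    unfold f; rw [hx (21 + i), ← hxdef]
    rw [div_le_iff₀ (by nlinarith [hxq1])]
    nlinarith [hc2, mul_nonneg h1.le (mul_nonneg hc0.le (sub_nonneg.2 h2))]
  exact hstep.trans (by linarith [Real.add_one_le_exp (c * x)])

lemma geom_bound (m : ℕ) : ∑ i ∈ Finset.range m, t ^ i ≤ 1/(1 - t) := by
  have h1 : (0:ℝ) < 1 - t := by linarith [ht1]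
  have : ∑ i ∈ Finset.range m, t ^ i = (1 - t ^ m)/(1 - t) := by
    rw [geom_sum_eq ht1.ne, ← neg_div_neg_eq]; ring_nf
  rw [this]
  have h2 : (0:ℝ) ≤ t ^ m := pow_nonneg ht0.le m
  gcongr
  linarith

lemma sum_tail (m : ℕ) : ∑ i ∈ Finset.range m, (1/2) * t ^ (21 + i) ≤ S := by
  have h1 : (0:ℝ) < 1 - t := by linarith [ht1]
  have h2 : (0:ℝ) < 1 - q := by linarith [hq1]
  have hsum : ∑ i ∈ Finset.range m, (1/2) * t ^ (21 + i)
      = (1/2) * t ^ 21 * ∑ i ∈ Finset.range m, t ^ i := by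
    rw [Finset.mul_sum]
    refine Finset.sum_congr rfl fun i _ => ?_
    rw [pow_add]; ring
  rw [hsum]
  have h3 : (1/2) * t ^ 21 * ∑ i ∈ Finset.range m, t ^ i
      ≤ (1/2) * t ^ 21 * (1/(1 - t)) := by
    have := geom_bound m
    have hnn : (0:ℝ) ≤ (1/2) * t ^ 21 := (xpos 21).le
    exact mul_le_mul_of_nonneg_left this hnn
  refine h3.trans ?_
  unfold S
  have h4 : t ^ 21 ≤ q ^ 21 := pow_le_pow_left₀ ht0.le htq 21
  have h5 : 1/(1 - t) ≤ 1/(1 - q) := by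
    apply one_div_le_one_div_of_le h2
    linarith [htq]
  have h6 : (0:ℝ) ≤ t ^ 21 := pow_nonneg ht0.le 21
  have h7 : (0:ℝ) < 1/(1 - t) := one_div_pos.2 h1
  calc (1/2) * t ^ 21 * (1/(1 - t)) ≤ (1/2) * q ^ 21 * (1/(1 - q)) := by
        apply mul_le_mul (by linarith) h5 h7.le (by nlinarith [pow_pos hq0 21])
    _ = q^21/2/(1 - q) := by ring

lemma hcs_pos : 0 < 1 - c*S := by unfold c S q; norm_num
lemma hcs_ne : c*S ≠ 0 := by unfold c S q; norm_num

lemma exp_bound : Real.exp (c*S) < (1 - c*S)⁻¹ := by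
  have h := Real.add_one_lt_exp (x := -(c*S)) (by simpa using hcs_ne)
  rw [Real.exp_neg] at h
  have h1 := hcs_pos
  have h2 : 0 < Real.exp (c*S) := Real.exp_pos _
  rw [lt_inv_comm₀ h2 h1]
  linarith

lemma tail_prod (m : ℕ) : ∏ i ∈ Finset.range m, f (21 + i) ≤ (1 - c*S)⁻¹ := by
  have h1 : ∏ i ∈ Finset.range m, f (21 + i)
      ≤ ∏ i ∈ Finset.range m, Real.exp (c * ((1/2) * t ^ (21 + i))) :=
    Finset.prod_le_prod (fun i _ => le_trans zero_le_one (hf_one _))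
      (fun i _ => hf_tail i)
  refine h1.trans ?_
  rw [← Real.exp_sum]
  have h2 : ∑ i ∈ Finset.range m, c * ((1/2) * t ^ (21 + i)) ≤ c * S := by
    rw [← Finset.mul_sum]
    exact mul_le_mul_of_nonneg_left (sum_tail m) hc0.le
  exact (Real.exp_le_exp.2 h2).trans exp_bound.le

set_option maxHeartbeats 1000000 in
lemma hB : B < 35.21 := by
  unfold B Q c S q
  simp only [Finset.prod_range_succ, Finset.prod_range_zero]
  norm_num

end InfProdAux
end

section Main
open InfProdAux

/-- **Numerical infinite product bound from the proof of Theorem 2.3 of the paper.**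
The infinite product `∏_{ℓ=0}^∞ (1 + 2^{-1-ℓ/2})/(1 - 2^{-1-ℓ/2})` converges (in the
sense that its partial products converge) and its value is strictly less than `35.21`. -/
theorem infinite_product_lt :
    ∃ P : ℝ,
      Filter.Tendsto
        (fun N : ℕ => ∏ ℓ ∈ Finset.range (N + 1),
          (1 + (2 : ℝ) ^ (-1 - (ℓ : ℝ) / 2)) / (1 - (2 : ℝ) ^ (-1 - (ℓ : ℝ) / 2)))
        Filter.atTop (nhds P) ∧
      P < 35.21 := by
  have hfnn : ∀ i : ℕ, (0:ℝ) ≤ f i := fun i => le_trans zero_le_one (hf_one i)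
  set P : ℕ → ℝ := fun N => ∏ ℓ ∈ Finset.range (N+1), f ℓ with hPdef
  have hmono : Monotone P := by
    apply monotone_nat_of_le_succ
    intro n
    have h0 : (0:ℝ) ≤ P n := Finset.prod_nonneg fun i _ => hfnn i
    have h1 := hf_one (n+1)
    calc P n = P n * 1 := (mul_one _).symm
      _ ≤ P n * f (n+1) := mul_le_mul_of_nonneg_left h1 h0
      _ = P (n+1) := (Finset.prod_range_succ f (n+1)).symm
  have h20 : P 20 ≤ Q :=
    Finset.prod_le_prod (fun i _ => hfnn i) (fun i _ => hf_le i)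
  have hQ0 : 0 ≤ Q :=
    le_trans (Finset.prod_nonneg fun i _ => hfnn i) h20
  have hS0 : 0 < S := div_pos hxq0 (by linarith [hq1])
  have hcsp : 0 < c * S := mul_pos hc0 hS0
  have hpos := hcs_pos
  have hminv : (1 - c*S) * (1 - c*S)⁻¹ = 1 := mul_inv_cancel₀ hpos.ne'
  have hinv1 : 1 ≤ (1 - c*S)⁻¹ := by nlinarith [hminv, hcsp, hpos]
  have hbound : ∀ N, P N ≤ B := by
    intro N
    rcases le_or_gt N 20 with hN | hN
    · calc P N ≤ P 20 := hmono hN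
        _ ≤ Q := h20
        _ ≤ Q * (1 - c*S)⁻¹ := le_mul_of_one_le_right hQ0 hinv1
        _ = B := rfl
    · obtain ⟨m, hm⟩ : ∃ m, N + 1 = 21 + m := ⟨N - 20, by omega⟩
      have hsplit : P N = (∏ ℓ ∈ Finset.range 21, f ℓ) *
          ∏ i ∈ Finset.range m, f (21 + i) := by
        simp only [hPdef]
        rw [hm, Finset.prod_range_add]
      rw [hsplit]
      have htail0 : (0:ℝ) ≤ ∏ i ∈ Finset.range m, f (21 + i) :=
        Finset.prod_nonneg fun i _ => hfnn _
      exact mul_le_mul h20 (tail_prod m) htail0 hQ0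
  refine ⟨⨆ N, P N, ?_, lt_of_le_of_lt (ciSup_le hbound) hB⟩
  exact tendsto_atTop_ciSup hmono ⟨B, by rintro y ⟨N, rfl⟩; exact hbound N⟩

end Main
end
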